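/- arXiv:2501.16483 — 2 statements merged into one kernel-verified Lean document; each statement's English description precedes it below -/
import Mathlib

section
/- With F(x,y) as in the Duistermaat–Grünbaum reduction, for each j ∈ {1,2,3} the polynomial F has a zero of order exactly 3 at (e_j, e_j): writing x_j := x − e_j, y_j := y − e_j, the lowest-degree homogeneous part of F at (e_j,e_j) is the degree-3 form 4E_j²x_j²[(12e_j² − g₂)(x_j − y_j) + 16E_j y_j] − (2α_j+1)² E_j³ (x_j − y_j)³. -/
open MvPolynomial

/-- `Π(t) = (t−e₁)(t−e₂)(t−e₃)` applied to a polynomial `t` in two variables. -/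
noncomputable def PiPoly (e1 e2 e3 : ℂ) (t : MvPolynomial (Fin 2) ℂ) :
    MvPolynomial (Fin 2) ℂ :=
  (t - C e1) * (t - C e2) * (t - C e3)

/-- The Duistermaat–Grünbaum polynomial `F(x,y)` as a polynomial in two variables
`x = X 0`, `y = X 1`. -/
noncomputable def Fpoly (e1 e2 e3 g2 : ℂ) (a0 a1 a2 a3 : ℕ) :
    MvPolynomial (Fin 2) ℂ :=
  4 * (PiPoly e1 e2 e3 (X 0)) ^ 2 *
      ((12 * (X 1) ^ 2 - C g2) * (X 0 - X 1) + 16 * PiPoly e1 e2 e3 (X 1)) +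
    (X 0 - X 1) ^ 3 *
      (C ((2 * (a0 : ℂ) + 1) ^ 2) * (PiPoly e1 e2 e3 (X 0)) ^ 2 -
        (C ((2 * (a1 : ℂ) + 1) ^ 2 * ((e1 - e2) * (e1 - e3))) *
            ((X 0 - C e2) ^ 2 * (X 0 - C e3) ^ 2) +
         C ((2 * (a2 : ℂ) + 1) ^ 2 * ((e2 - e1) * (e2 - e3))) *
            ((X 0 - C e1) ^ 2 * (X 0 - C e3) ^ 2) +
         C ((2 * (a3 : ℂ) + 1) ^ 2 * ((e3 - e1) * (e3 - e2))) *
            ((X 0 - C e1) ^ 2 * (X 0 - C e2) ^ 2)))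

/-- `F` translated so that the point `(e_j, e_j)` becomes the origin, i.e.
`F(e_j + x_j, e_j + y_j)` (here `j = 1`; the situation is symmetric in `j`). -/
noncomputable def FpolyShift (e1 e2 e3 g2 : ℂ) (a0 a1 a2 a3 : ℕ) :
    MvPolynomial (Fin 2) ℂ :=
  aeval (fun i : Fin 2 => X i + C e1) (Fpoly e1 e2 e3 g2 a0 a1 a2 a3)

set_option linter.unusedVariables false

lemma monoHom (r : ℂ) (i j l n : ℕ) (h : i + j + l = n) :
    (C r * X 0 ^ i * X 1 ^ j * (X 0 - X 1) ^ l : MvPolynomial (Fin 2) ℂ).IsHomogeneous n := by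
  subst h
  have hD : (X 0 - X 1 : MvPolynomial (Fin 2) ℂ).IsHomogeneous 1 := by
    rw [sub_eq_add_neg]
    exact (isHomogeneous_X ℂ (0 : Fin 2)).add ((isHomogeneous_X ℂ (1 : Fin 2)).neg)
  simpa using (((isHomogeneous_C (Fin 2) r).mul ((isHomogeneous_X ℂ (0 : Fin 2)).pow i)).mul
    ((isHomogeneous_X ℂ (1 : Fin 2)).pow j)).mul (hD.pow l)

noncomputable def Pd3 (b c w1 w0 K0 K1 K2 K3 M2 M3 : ℂ) : MvPolynomial (Fin 2) ℂ :=
  C (4*((b*c)^2)*w0 : ℂ) * X 0 ^ 2 * X 1 ^ 0 * (X 0 - X 1) ^ 1 +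
  C (64*((b*c)^2)*(b*c) : ℂ) * X 0 ^ 2 * X 1 ^ 1 * (X 0 - X 1) ^ 0 +
  C (-(K1*(b*c)^3) : ℂ) * X 0 ^ 0 * X 1 ^ 0 * (X 0 - X 1) ^ 3

noncomputable def Pd4 (b c w1 w0 K0 K1 K2 K3 M2 M3 : ℂ) : MvPolynomial (Fin 2) ℂ :=
  C (4*((b*c)^2)*w1 : ℂ) * X 0 ^ 2 * X 1 ^ 1 * (X 0 - X 1) ^ 1 +
  C (64*((b*c)^2)*(b+c) : ℂ) * X 0 ^ 2 * X 1 ^ 2 * (X 0 - X 1) ^ 0 +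
  C (4*(2*(b*c)*(b+c))*w0 : ℂ) * X 0 ^ 3 * X 1 ^ 0 * (X 0 - X 1) ^ 1 +
  C (64*(2*(b*c)*(b+c))*(b*c) : ℂ) * X 0 ^ 3 * X 1 ^ 1 * (X 0 - X 1) ^ 0 +
  C (-(2*K1*(b*c)^2*(b+c)) : ℂ) * X 0 ^ 1 * X 1 ^ 0 * (X 0 - X 1) ^ 3

noncomputable def Pd5 (b c w1 w0 K0 K1 K2 K3 M2 M3 : ℂ) : MvPolynomial (Fin 2) ℂ :=
  C (48*((b*c)^2) : ℂ) * X 0 ^ 2 * X 1 ^ 2 * (X 0 - X 1) ^ 1 +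
  C (64*((b*c)^2) : ℂ) * X 0 ^ 2 * X 1 ^ 3 * (X 0 - X 1) ^ 0 +
  C (4*(2*(b*c)*(b+c))*w1 : ℂ) * X 0 ^ 3 * X 1 ^ 1 * (X 0 - X 1) ^ 1 +
  C (64*(2*(b*c)*(b+c))*(b+c) : ℂ) * X 0 ^ 3 * X 1 ^ 2 * (X 0 - X 1) ^ 0 +
  C (4*(2*(b*c)+(b+c)^2)*w0 : ℂ) * X 0 ^ 4 * X 1 ^ 0 * (X 0 - X 1) ^ 1 +
  C (64*(2*(b*c)+(b+c)^2)*(b*c) : ℂ) * X 0 ^ 4 * X 1 ^ 1 * (X 0 - X 1) ^ 0 +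
  C (K0*(b*c)^2 - K1*(b*c)*((b+c)^2+2*(b*c)) - K2*M2*c^2 - K3*M3*b^2 : ℂ) * X 0 ^ 2 * X 1 ^ 0 * (X 0 - X 1) ^ 3

noncomputable def Pd6 (b c w1 w0 K0 K1 K2 K3 M2 M3 : ℂ) : MvPolynomial (Fin 2) ℂ :=
  C (48*(2*(b*c)*(b+c)) : ℂ) * X 0 ^ 3 * X 1 ^ 2 * (X 0 - X 1) ^ 1 +
  C (64*(2*(b*c)*(b+c)) : ℂ) * X 0 ^ 3 * X 1 ^ 3 * (X 0 - X 1) ^ 0 +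
  C (4*(2*(b*c)+(b+c)^2)*w1 : ℂ) * X 0 ^ 4 * X 1 ^ 1 * (X 0 - X 1) ^ 1 +
  C (64*(2*(b*c)+(b+c)^2)*(b+c) : ℂ) * X 0 ^ 4 * X 1 ^ 2 * (X 0 - X 1) ^ 0 +
  C (4*(2*(b+c))*w0 : ℂ) * X 0 ^ 5 * X 1 ^ 0 * (X 0 - X 1) ^ 1 +
  C (64*(2*(b+c))*(b*c) : ℂ) * X 0 ^ 5 * X 1 ^ 1 * (X 0 - X 1) ^ 0 +
  C (2*K0*(b*c)*(b+c) - 2*K1*(b*c)*(b+c) - 2*K2*M2*c - 2*K3*M3*b : ℂ) * X 0 ^ 3 * X 1 ^ 0 * (X 0 - X 1) ^ 3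

noncomputable def Pd7 (b c w1 w0 K0 K1 K2 K3 M2 M3 : ℂ) : MvPolynomial (Fin 2) ℂ :=
  C (48*(2*(b*c)+(b+c)^2) : ℂ) * X 0 ^ 4 * X 1 ^ 2 * (X 0 - X 1) ^ 1 +
  C (64*(2*(b*c)+(b+c)^2) : ℂ) * X 0 ^ 4 * X 1 ^ 3 * (X 0 - X 1) ^ 0 +
  C (4*(2*(b+c))*w1 : ℂ) * X 0 ^ 5 * X 1 ^ 1 * (X 0 - X 1) ^ 1 +
  C (64*(2*(b+c))*(b+c) : ℂ) * X 0 ^ 5 * X 1 ^ 2 * (X 0 - X 1) ^ 0 +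
  C (4*((1:ℂ))*w0 : ℂ) * X 0 ^ 6 * X 1 ^ 0 * (X 0 - X 1) ^ 1 +
  C (64*((1:ℂ))*(b*c) : ℂ) * X 0 ^ 6 * X 1 ^ 1 * (X 0 - X 1) ^ 0 +
  C (K0*(2*(b*c)+(b+c)^2) - K1*(b*c) - K2*M2 - K3*M3 : ℂ) * X 0 ^ 4 * X 1 ^ 0 * (X 0 - X 1) ^ 3

noncomputable def Pd8 (b c w1 w0 K0 K1 K2 K3 M2 M3 : ℂ) : MvPolynomial (Fin 2) ℂ :=
  C (48*(2*(b+c)) : ℂ) * X 0 ^ 5 * X 1 ^ 2 * (X 0 - X 1) ^ 1 +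
  C (64*(2*(b+c)) : ℂ) * X 0 ^ 5 * X 1 ^ 3 * (X 0 - X 1) ^ 0 +
  C (4*((1:ℂ))*w1 : ℂ) * X 0 ^ 6 * X 1 ^ 1 * (X 0 - X 1) ^ 1 +
  C (64*((1:ℂ))*(b+c) : ℂ) * X 0 ^ 6 * X 1 ^ 2 * (X 0 - X 1) ^ 0 +
  C (2*K0*(b+c) : ℂ) * X 0 ^ 5 * X 1 ^ 0 * (X 0 - X 1) ^ 3

noncomputable def Pd9 (b c w1 w0 K0 K1 K2 K3 M2 M3 : ℂ) : MvPolynomial (Fin 2) ℂ :=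
  C (48*((1:ℂ)) : ℂ) * X 0 ^ 6 * X 1 ^ 2 * (X 0 - X 1) ^ 1 +
  C (64*((1:ℂ)) : ℂ) * X 0 ^ 6 * X 1 ^ 3 * (X 0 - X 1) ^ 0 +
  C (K0 : ℂ) * X 0 ^ 6 * X 1 ^ 0 * (X 0 - X 1) ^ 3

lemma homPd3 (b c w1 w0 K0 K1 K2 K3 M2 M3 : ℂ) :
    (Pd3 b c w1 w0 K0 K1 K2 K3 M2 M3).IsHomogeneous 3 := by
  unfold Pd3
  exact ((monoHom _ 2 0 1 3 (by norm_num)).add (monoHom _ 2 1 0 3 (by norm_num))).add (monoHom _ 0 0 3 3 (by norm_num))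

lemma homPd4 (b c w1 w0 K0 K1 K2 K3 M2 M3 : ℂ) :
    (Pd4 b c w1 w0 K0 K1 K2 K3 M2 M3).IsHomogeneous 4 := by
  unfold Pd4
  exact ((((monoHom _ 2 1 1 4 (by norm_num)).add (monoHom _ 2 2 0 4 (by norm_num))).add (monoHom _ 3 0 1 4 (by norm_num))).add (monoHom _ 3 1 0 4 (by norm_num))).add (monoHom _ 1 0 3 4 (by norm_num))

lemma homPd5 (b c w1 w0 K0 K1 K2 K3 M2 M3 : ℂ) :
    (Pd5 b c w1 w0 K0 K1 K2 K3 M2 M3).IsHomogeneous 5 := by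
  unfold Pd5
  exact ((((((monoHom _ 2 2 1 5 (by norm_num)).add (monoHom _ 2 3 0 5 (by norm_num))).add (monoHom _ 3 1 1 5 (by norm_num))).add (monoHom _ 3 2 0 5 (by norm_num))).add (monoHom _ 4 0 1 5 (by norm_num))).add (monoHom _ 4 1 0 5 (by norm_num))).add (monoHom _ 2 0 3 5 (by norm_num))

lemma homPd6 (b c w1 w0 K0 K1 K2 K3 M2 M3 : ℂ) :
    (Pd6 b c w1 w0 K0 K1 K2 K3 M2 M3).IsHomogeneous 6 := by
  unfold Pd6
  exact ((((((monoHom _ 3 2 1 6 (by norm_num)).add (monoHom _ 3 3 0 6 (by norm_num))).add (monoHom _ 4 1 1 6 (by norm_num))).add (monoHom _ 4 2 0 6 (by norm_num))).add (monoHom _ 5 0 1 6 (by norm_num))).add (monoHom _ 5 1 0 6 (by norm_num))).add (monoHom _ 3 0 3 6 (by norm_num))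

lemma homPd7 (b c w1 w0 K0 K1 K2 K3 M2 M3 : ℂ) :
    (Pd7 b c w1 w0 K0 K1 K2 K3 M2 M3).IsHomogeneous 7 := by
  unfold Pd7
  exact ((((((monoHom _ 4 2 1 7 (by norm_num)).add (monoHom _ 4 3 0 7 (by norm_num))).add (monoHom _ 5 1 1 7 (by norm_num))).add (monoHom _ 5 2 0 7 (by norm_num))).add (monoHom _ 6 0 1 7 (by norm_num))).add (monoHom _ 6 1 0 7 (by norm_num))).add (monoHom _ 4 0 3 7 (by norm_num))

lemma homPd8 (b c w1 w0 K0 K1 K2 K3 M2 M3 : ℂ) :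
    (Pd8 b c w1 w0 K0 K1 K2 K3 M2 M3).IsHomogeneous 8 := by
  unfold Pd8
  exact ((((monoHom _ 5 2 1 8 (by norm_num)).add (monoHom _ 5 3 0 8 (by norm_num))).add (monoHom _ 6 1 1 8 (by norm_num))).add (monoHom _ 6 2 0 8 (by norm_num))).add (monoHom _ 5 0 3 8 (by norm_num))

lemma homPd9 (b c w1 w0 K0 K1 K2 K3 M2 M3 : ℂ) :
    (Pd9 b c w1 w0 K0 K1 K2 K3 M2 M3).IsHomogeneous 9 := by
  unfold Pd9
  exact ((monoHom _ 6 2 1 9 (by norm_num)).add (monoHom _ 6 3 0 9 (by norm_num))).add (monoHom _ 6 0 3 9 (by norm_num))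

set_option maxHeartbeats 4000000 in
lemma absDecomp (b c w1 w0 K0 K1 K2 K3 M2 M3 : ℂ) :
    (4 * (X 0 * (X 0 + C b) * (X 0 + C c)) ^ 2 *
        ((12 * X 1 ^ 2 + C w1 * X 1 + C w0) * (X 0 - X 1) +
          16 * (X 1 * (X 1 + C b) * (X 1 + C c))) +
      (X 0 - X 1) ^ 3 *
        (C K0 * (X 0 * (X 0 + C b) * (X 0 + C c)) ^ 2 -
          (C (K1 * (b * c)) * ((X 0 + C b) ^ 2 * (X 0 + C c) ^ 2) +
           C (K2 * M2) * (X 0 ^ 2 * (X 0 + C c) ^ 2) +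
           C (K3 * M3) * (X 0 ^ 2 * (X 0 + C b) ^ 2))) : MvPolynomial (Fin 2) ℂ) =
      Pd3 b c w1 w0 K0 K1 K2 K3 M2 M3 +
      Pd4 b c w1 w0 K0 K1 K2 K3 M2 M3 +
      Pd5 b c w1 w0 K0 K1 K2 K3 M2 M3 +
      Pd6 b c w1 w0 K0 K1 K2 K3 M2 M3 +
      Pd7 b c w1 w0 K0 K1 K2 K3 M2 M3 +
      Pd8 b c w1 w0 K0 K1 K2 K3 M2 M3 +
      Pd9 b c w1 w0 K0 K1 K2 K3 M2 M3 := by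
  simp only [Pd3, Pd4, Pd5, Pd6, Pd7, Pd8, Pd9,
    map_ofNat, map_one, map_neg, C_mul, C_add, C_pow, C_neg, C_sub, C_1]
  ring

set_option maxHeartbeats 1000000 in
lemma keyDecomp (e1 e2 e3 g2 : ℂ) (a0 a1 a2 a3 : ℕ) :
    FpolyShift e1 e2 e3 g2 a0 a1 a2 a3 =
      Pd3 (e1-e2) (e1-e3) (24*e1) (12*e1^2-g2) ((2*(a0:ℂ)+1)^2) ((2*(a1:ℂ)+1)^2) ((2*(a2:ℂ)+1)^2) ((2*(a3:ℂ)+1)^2) ((e2-e1)*(e2-e3)) ((e3-e1)*(e3-e2)) +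
      Pd4 (e1-e2) (e1-e3) (24*e1) (12*e1^2-g2) ((2*(a0:ℂ)+1)^2) ((2*(a1:ℂ)+1)^2) ((2*(a2:ℂ)+1)^2) ((2*(a3:ℂ)+1)^2) ((e2-e1)*(e2-e3)) ((e3-e1)*(e3-e2)) +
      Pd5 (e1-e2) (e1-e3) (24*e1) (12*e1^2-g2) ((2*(a0:ℂ)+1)^2) ((2*(a1:ℂ)+1)^2) ((2*(a2:ℂ)+1)^2) ((2*(a3:ℂ)+1)^2) ((e2-e1)*(e2-e3)) ((e3-e1)*(e3-e2)) +
      Pd6 (e1-e2) (e1-e3) (24*e1) (12*e1^2-g2) ((2*(a0:ℂ)+1)^2) ((2*(a1:ℂ)+1)^2) ((2*(a2:ℂ)+1)^2) ((2*(a3:ℂ)+1)^2) ((e2-e1)*(e2-e3)) ((e3-e1)*(e3-e2)) +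
      Pd7 (e1-e2) (e1-e3) (24*e1) (12*e1^2-g2) ((2*(a0:ℂ)+1)^2) ((2*(a1:ℂ)+1)^2) ((2*(a2:ℂ)+1)^2) ((2*(a3:ℂ)+1)^2) ((e2-e1)*(e2-e3)) ((e3-e1)*(e3-e2)) +
      Pd8 (e1-e2) (e1-e3) (24*e1) (12*e1^2-g2) ((2*(a0:ℂ)+1)^2) ((2*(a1:ℂ)+1)^2) ((2*(a2:ℂ)+1)^2) ((2*(a3:ℂ)+1)^2) ((e2-e1)*(e2-e3)) ((e3-e1)*(e3-e2)) +
      Pd9 (e1-e2) (e1-e3) (24*e1) (12*e1^2-g2) ((2*(a0:ℂ)+1)^2) ((2*(a1:ℂ)+1)^2) ((2*(a2:ℂ)+1)^2) ((2*(a3:ℂ)+1)^2) ((e2-e1)*(e2-e3)) ((e3-e1)*(e3-e2)) := by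
  have hB1 : (X 0 + C e1 - C e1 : MvPolynomial (Fin 2) ℂ) = X 0 := by ring
  have hB2 : (X 0 + C e1 - C e2 : MvPolynomial (Fin 2) ℂ) = X 0 + C (e1 - e2) := by
    rw [C_sub]; ring
  have hB3 : (X 0 + C e1 - C e3 : MvPolynomial (Fin 2) ℂ) = X 0 + C (e1 - e3) := by
    rw [C_sub]; ring
  have hB1y : (X 1 + C e1 - C e1 : MvPolynomial (Fin 2) ℂ) = X 1 := by ring
  have hB2y : (X 1 + C e1 - C e2 : MvPolynomial (Fin 2) ℂ) = X 1 + C (e1 - e2) := by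
    rw [C_sub]; ring
  have hB3y : (X 1 + C e1 - C e3 : MvPolynomial (Fin 2) ℂ) = X 1 + C (e1 - e3) := by
    rw [C_sub]; ring
  have hD' : (X 0 + C e1 - (X 1 + C e1) : MvPolynomial (Fin 2) ℂ) = X 0 - X 1 := by ring
  have hW : (12 * (X 1 + C e1) ^ 2 - C g2 : MvPolynomial (Fin 2) ℂ) =
      12 * X 1 ^ 2 + C (24 * e1) * X 1 + C (12 * e1 ^ 2 - g2) := by
    simp only [C_sub, C_mul, C_pow, map_ofNat]; ring
  rw [FpolyShift, Fpoly, PiPoly, PiPoly]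
  simp only [map_add (aeval (R := ℂ) (fun i : Fin 2 => (X i + C e1 : MvPolynomial (Fin 2) ℂ))), map_mul (aeval (R := ℂ) (fun i : Fin 2 => (X i + C e1 : MvPolynomial (Fin 2) ℂ))), map_sub (aeval (R := ℂ) (fun i : Fin 2 => (X i + C e1 : MvPolynomial (Fin 2) ℂ))), map_pow (aeval (R := ℂ) (fun i : Fin 2 => (X i + C e1 : MvPolynomial (Fin 2) ℂ))), map_ofNat,
    aeval_X, aeval_C, algebraMap_eq]
  rw [hB1, hB2, hB3, hB1y, hB2y, hB3y, hD', hW]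
  exact absDecomp (e1-e2) (e1-e3) (24*e1) (12*e1^2-g2) ((2*(a0:ℂ)+1)^2) ((2*(a1:ℂ)+1)^2) ((2*(a2:ℂ)+1)^2) ((2*(a3:ℂ)+1)^2) ((e2-e1)*(e2-e3)) ((e3-e1)*(e3-e2))

set_option maxHeartbeats 1000000 in
lemma P3eq (e1 e2 e3 g2 : ℂ) (a0 a1 a2 a3 : ℕ) :
    Pd3 (e1-e2) (e1-e3) (24*e1) (12*e1^2-g2) ((2*(a0:ℂ)+1)^2) ((2*(a1:ℂ)+1)^2) ((2*(a2:ℂ)+1)^2) ((2*(a3:ℂ)+1)^2) ((e2-e1)*(e2-e3)) ((e3-e1)*(e3-e2)) =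
      C (4 * ((e1 - e2) * (e1 - e3)) ^ 2) * (X 0) ^ 2 *
          (C (12 * e1 ^ 2 - g2) * (X 0 - X 1) + C (16 * ((e1 - e2) * (e1 - e3))) * X 1) -
        C ((2 * (a1 : ℂ) + 1) ^ 2 * ((e1 - e2) * (e1 - e3)) ^ 3) * (X 0 - X 1) ^ 3 := by
  simp only [Pd3, map_ofNat, map_one, map_neg, C_mul, C_add, C_pow, C_neg, C_sub, C_1]
  ring

lemma hcompAll (e1 e2 e3 g2 : ℂ) (a0 a1 a2 a3 : ℕ) (m : ℕ) :
    homogeneousComponent m (FpolyShift e1 e2 e3 g2 a0 a1 a2 a3) =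
        (if m = 3 then Pd3 (e1-e2) (e1-e3) (24*e1) (12*e1^2-g2) ((2*(a0:ℂ)+1)^2) ((2*(a1:ℂ)+1)^2) ((2*(a2:ℂ)+1)^2) ((2*(a3:ℂ)+1)^2) ((e2-e1)*(e2-e3)) ((e3-e1)*(e3-e2)) else 0) +
        (if m = 4 then Pd4 (e1-e2) (e1-e3) (24*e1) (12*e1^2-g2) ((2*(a0:ℂ)+1)^2) ((2*(a1:ℂ)+1)^2) ((2*(a2:ℂ)+1)^2) ((2*(a3:ℂ)+1)^2) ((e2-e1)*(e2-e3)) ((e3-e1)*(e3-e2)) else 0) +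
        (if m = 5 then Pd5 (e1-e2) (e1-e3) (24*e1) (12*e1^2-g2) ((2*(a0:ℂ)+1)^2) ((2*(a1:ℂ)+1)^2) ((2*(a2:ℂ)+1)^2) ((2*(a3:ℂ)+1)^2) ((e2-e1)*(e2-e3)) ((e3-e1)*(e3-e2)) else 0) +
        (if m = 6 then Pd6 (e1-e2) (e1-e3) (24*e1) (12*e1^2-g2) ((2*(a0:ℂ)+1)^2) ((2*(a1:ℂ)+1)^2) ((2*(a2:ℂ)+1)^2) ((2*(a3:ℂ)+1)^2) ((e2-e1)*(e2-e3)) ((e3-e1)*(e3-e2)) else 0) +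
        (if m = 7 then Pd7 (e1-e2) (e1-e3) (24*e1) (12*e1^2-g2) ((2*(a0:ℂ)+1)^2) ((2*(a1:ℂ)+1)^2) ((2*(a2:ℂ)+1)^2) ((2*(a3:ℂ)+1)^2) ((e2-e1)*(e2-e3)) ((e3-e1)*(e3-e2)) else 0) +
        (if m = 8 then Pd8 (e1-e2) (e1-e3) (24*e1) (12*e1^2-g2) ((2*(a0:ℂ)+1)^2) ((2*(a1:ℂ)+1)^2) ((2*(a2:ℂ)+1)^2) ((2*(a3:ℂ)+1)^2) ((e2-e1)*(e2-e3)) ((e3-e1)*(e3-e2)) else 0) +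
        (if m = 9 then Pd9 (e1-e2) (e1-e3) (24*e1) (12*e1^2-g2) ((2*(a0:ℂ)+1)^2) ((2*(a1:ℂ)+1)^2) ((2*(a2:ℂ)+1)^2) ((2*(a3:ℂ)+1)^2) ((e2-e1)*(e2-e3)) ((e3-e1)*(e3-e2)) else 0) := by
  rw [keyDecomp, map_add, map_add, map_add, map_add, map_add, map_add,
      homogeneousComponent_of_mem ((mem_homogeneousSubmodule _ _).mpr (homPd3 (e1-e2) (e1-e3) (24*e1) (12*e1^2-g2) ((2*(a0:ℂ)+1)^2) ((2*(a1:ℂ)+1)^2) ((2*(a2:ℂ)+1)^2) ((2*(a3:ℂ)+1)^2) ((e2-e1)*(e2-e3)) ((e3-e1)*(e3-e2)))),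
      homogeneousComponent_of_mem ((mem_homogeneousSubmodule _ _).mpr (homPd4 (e1-e2) (e1-e3) (24*e1) (12*e1^2-g2) ((2*(a0:ℂ)+1)^2) ((2*(a1:ℂ)+1)^2) ((2*(a2:ℂ)+1)^2) ((2*(a3:ℂ)+1)^2) ((e2-e1)*(e2-e3)) ((e3-e1)*(e3-e2)))),
      homogeneousComponent_of_mem ((mem_homogeneousSubmodule _ _).mpr (homPd5 (e1-e2) (e1-e3) (24*e1) (12*e1^2-g2) ((2*(a0:ℂ)+1)^2) ((2*(a1:ℂ)+1)^2) ((2*(a2:ℂ)+1)^2) ((2*(a3:ℂ)+1)^2) ((e2-e1)*(e2-e3)) ((e3-e1)*(e3-e2)))),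
      homogeneousComponent_of_mem ((mem_homogeneousSubmodule _ _).mpr (homPd6 (e1-e2) (e1-e3) (24*e1) (12*e1^2-g2) ((2*(a0:ℂ)+1)^2) ((2*(a1:ℂ)+1)^2) ((2*(a2:ℂ)+1)^2) ((2*(a3:ℂ)+1)^2) ((e2-e1)*(e2-e3)) ((e3-e1)*(e3-e2)))),
      homogeneousComponent_of_mem ((mem_homogeneousSubmodule _ _).mpr (homPd7 (e1-e2) (e1-e3) (24*e1) (12*e1^2-g2) ((2*(a0:ℂ)+1)^2) ((2*(a1:ℂ)+1)^2) ((2*(a2:ℂ)+1)^2) ((2*(a3:ℂ)+1)^2) ((e2-e1)*(e2-e3)) ((e3-e1)*(e3-e2)))),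
      homogeneousComponent_of_mem ((mem_homogeneousSubmodule _ _).mpr (homPd8 (e1-e2) (e1-e3) (24*e1) (12*e1^2-g2) ((2*(a0:ℂ)+1)^2) ((2*(a1:ℂ)+1)^2) ((2*(a2:ℂ)+1)^2) ((2*(a3:ℂ)+1)^2) ((e2-e1)*(e2-e3)) ((e3-e1)*(e3-e2)))),
      homogeneousComponent_of_mem ((mem_homogeneousSubmodule _ _).mpr (homPd9 (e1-e2) (e1-e3) (24*e1) (12*e1^2-g2) ((2*(a0:ℂ)+1)^2) ((2*(a1:ℂ)+1)^2) ((2*(a2:ℂ)+1)^2) ((2*(a3:ℂ)+1)^2) ((e2-e1)*(e2-e3)) ((e3-e1)*(e3-e2))))]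

/-- `F` has a zero of order exactly `3` at `(e_j, e_j)`: writing
`x_j := x − e_j`, `y_j := y − e_j`, all homogeneous parts of degree `< 3` of `F` at
`(e_j, e_j)` vanish and the lowest-degree homogeneous part is the (nonzero)
degree-3 form `4E_j²x_j²[(12e_j² − g₂)(x_j − y_j) + 16E_j y_j]
− (2α_j+1)²E_j³(x_j − y_j)³`. (Stated for `j = 1`; `F` is symmetric under
simultaneous permutations of `(e_j, α_j)`, `j = 1,2,3`.) -/
theorem stmt_9 (e1 e2 e3 g2 : ℂ) (a0 a1 a2 a3 : ℕ)
    (h12 : e1 ≠ e2) (h13 : e1 ≠ e3) (h23 : e2 ≠ e3)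
    (hsum : e1 + e2 + e3 = 0)
    (hg2 : g2 = -4 * (e1 * e2 + e1 * e3 + e2 * e3)) :
    (∀ d : ℕ, d < 3 →
      homogeneousComponent d (FpolyShift e1 e2 e3 g2 a0 a1 a2 a3) = 0) ∧
    homogeneousComponent 3 (FpolyShift e1 e2 e3 g2 a0 a1 a2 a3) =
      C (4 * ((e1 - e2) * (e1 - e3)) ^ 2) * (X 0) ^ 2 *
          (C (12 * e1 ^ 2 - g2) * (X 0 - X 1) + C (16 * ((e1 - e2) * (e1 - e3))) * X 1) -
        C ((2 * (a1 : ℂ) + 1) ^ 2 * ((e1 - e2) * (e1 - e3)) ^ 3) * (X 0 - X 1) ^ 3 ∧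
    homogeneousComponent 3 (FpolyShift e1 e2 e3 g2 a0 a1 a2 a3) ≠ 0 := by
  have h3eq : homogeneousComponent 3 (FpolyShift e1 e2 e3 g2 a0 a1 a2 a3) =
      C (4 * ((e1 - e2) * (e1 - e3)) ^ 2) * (X 0) ^ 2 *
          (C (12 * e1 ^ 2 - g2) * (X 0 - X 1) + C (16 * ((e1 - e2) * (e1 - e3))) * X 1) -
        C ((2 * (a1 : ℂ) + 1) ^ 2 * ((e1 - e2) * (e1 - e3)) ^ 3) * (X 0 - X 1) ^ 3 := by
    rw [hcompAll]
    simp only [Nat.reduceEqDiff, reduceIte, add_zero, zero_add]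
    exact P3eq e1 e2 e3 g2 a0 a1 a2 a3
  refine ⟨?_, h3eq, ?_⟩
  · intro d hd
    rw [hcompAll]
    interval_cases d <;> simp only [Nat.reduceEqDiff, reduceIte, add_zero, zero_add]
  · rw [h3eq]
    intro hz
    have he := congrArg (eval fun i : Fin 2 => if i = 0 then (0:ℂ) else 1) hz
    have h1 : e1 - e2 ≠ 0 := sub_ne_zero.mpr h12
    have h2 : e1 - e3 ≠ 0 := sub_ne_zero.mpr h13
    have h3' : (2 * (a1:ℂ) + 1) ≠ 0 := by
      have h := (Nat.cast_ne_zero (R := ℂ)).mpr (show 2 * a1 + 1 ≠ 0 by omega)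
      push_cast at h
      exact h
    simp [mul_eq_zero, pow_eq_zero_iff, h1, h2, h3', sub_eq_zero] at he
end

section
/- In ℙ²(ℂ), let 𝒞₀ := {x² + y² − 2z² = 0} and ℋ₀ := {y − z = 0}. Fix q = [α:β:γ] ∈ 𝒞₀ with β ≠ γ. In the pencil of conics u(x² + y² − 2z²) + v(αx + βy − 2γz)² = 0, the members meeting ℋ₀ in exactly one point are exactly those with u = 0 or u = 2(β−γ)²v; the second gives the conic 𝒞_q^{(4,1,1)} := {(β−2γ)²x² + (3β²−4βγ+2γ²)y² + 2αβxy − 4αγxz − 4βγyz + 4β(2γ−β)z² = 0}, and it is tangent to ℋ₀ at [α : 2γ−β : 2γ−β]. -/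
private lemma cross_prop (p p' : ℂ × ℂ) (hp : p ≠ 0)
    (h : p.1 * p'.2 = p.2 * p'.1) : ∃ c : ℂ, p' = c • p := by
  rcases eq_or_ne p.1 0 with h1 | h1
  · have h2 : p.2 ≠ 0 := by
      intro h2; exact hp (Prod.ext h1 h2)
    have h3 : p'.1 = 0 := by
      have h4 : p.2 * p'.1 = 0 := by rw [← h, h1, zero_mul]
      exact (mul_eq_zero.mp h4).resolve_left h2
    refine ⟨p'.2 / p.2, Prod.ext ?_ ?_⟩
    · simp [h1, h3]
    · simp only [Prod.smul_snd, smul_eq_mul]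
      field_simp
  · refine ⟨p'.1 / p.1, Prod.ext ?_ ?_⟩
    · simp only [Prod.smul_fst, smul_eq_mul]
      field_simp
    · simp only [Prod.smul_snd, smul_eq_mul]
      rw [div_mul_eq_mul_div, eq_div_iff h1]
      linear_combination h

private lemma lin_prop (A B : ℂ) (hAB : A ≠ 0 ∨ B ≠ 0) (p p' : ℂ × ℂ) (hp : p ≠ 0)
    (e : A * p.1 + B * p.2 = 0) (e' : A * p'.1 + B * p'.2 = 0) :
    ∃ c : ℂ, p' = c • p := by
  apply cross_prop p p' hp
  rcases hAB with hA | hB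
  · apply mul_left_cancel₀ hA
    linear_combination p'.2 * e - p.2 * e'
  · apply mul_left_cancel₀ hB
    linear_combination p.1 * e' - p'.1 * e




/-- In `ℙ²(ℂ)`, let `𝒞₀ := {x² + y² − 2z² = 0}` and `ℋ₀ := {y = z}`.
Fix `q = [α:β:γ] ∈ 𝒞₀` with `β ≠ γ`. In the pencil of conics
`u(x² + y² − 2z²) + v(αx + βy − 2γz)² = 0`, the members meeting `ℋ₀` in exactly one
(projective) point are exactly those with `u = 0` or `u = 2(β−γ)²v`; the second
choice gives the conic
`𝒞_q^{(4,1,1)} = {(β−2γ)²x² + (3β²−4βγ+2γ²)y² + 2αβxy − 4αγxz − 4βγyz + 4β(2γ−β)z² = 0}`,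
and it is tangent to `ℋ₀` at `[α : 2γ−β : 2γ−β]`.
(Points of `ℋ₀` are parameterized as `[x : t : t]`; "exactly one projective point"
means the nonzero solutions `(x,t)` exist and are all proportional.) -/
theorem stmt_15 (α β γ : ℂ) (hq : α ^ 2 + β ^ 2 - 2 * γ ^ 2 = 0) (hβγ : β ≠ γ) :
    (∀ u v : ℂ, (u, v) ≠ (0, 0) →
      (((∃ p : ℂ × ℂ, p ≠ 0 ∧
            u * (p.1 ^ 2 + p.2 ^ 2 - 2 * p.2 ^ 2) +
              v * (α * p.1 + β * p.2 - 2 * γ * p.2) ^ 2 = 0) ∧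
        (∀ p p' : ℂ × ℂ, p ≠ 0 → p' ≠ 0 →
          u * (p.1 ^ 2 + p.2 ^ 2 - 2 * p.2 ^ 2) +
            v * (α * p.1 + β * p.2 - 2 * γ * p.2) ^ 2 = 0 →
          u * (p'.1 ^ 2 + p'.2 ^ 2 - 2 * p'.2 ^ 2) +
            v * (α * p'.1 + β * p'.2 - 2 * γ * p'.2) ^ 2 = 0 →
          ∃ c : ℂ, p' = c • p)) ↔
        (u = 0 ∨ u = 2 * (β - γ) ^ 2 * v))) ∧
    (∀ x y z : ℂ,
      2 * (β - γ) ^ 2 * (x ^ 2 + y ^ 2 - 2 * z ^ 2) + (α * x + β * y - 2 * γ * z) ^ 2 =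
        (β - 2 * γ) ^ 2 * x ^ 2 + (3 * β ^ 2 - 4 * β * γ + 2 * γ ^ 2) * y ^ 2 +
          2 * α * β * x * y - 4 * α * γ * x * z - 4 * β * γ * y * z +
          4 * β * (2 * γ - β) * z ^ 2) ∧
    ((α, 2 * γ - β) ≠ ((0 : ℂ), (0 : ℂ)) ∧
      (β - 2 * γ) ^ 2 * α ^ 2 + (3 * β ^ 2 - 4 * β * γ + 2 * γ ^ 2) * (2 * γ - β) ^ 2 +
          2 * α * β * α * (2 * γ - β) - 4 * α * γ * α * (2 * γ - β) -
          4 * β * γ * (2 * γ - β) * (2 * γ - β) + 4 * β * (2 * γ - β) * (2 * γ - β) ^ 2 = 0 ∧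
      (∀ x t : ℂ, (x, t) ≠ ((0 : ℂ), (0 : ℂ)) →
        (β - 2 * γ) ^ 2 * x ^ 2 + (3 * β ^ 2 - 4 * β * γ + 2 * γ ^ 2) * t ^ 2 +
            2 * α * β * x * t - 4 * α * γ * x * t - 4 * β * γ * t * t +
            4 * β * (2 * γ - β) * t ^ 2 = 0 →
        ∃ c : ℂ, (x, t) = c • (α, 2 * γ - β))) := by

  have key : α ≠ 0 ∨ 2 * γ - β ≠ 0 := by
    by_contra hc
    push_neg at hc
    obtain ⟨h1, h2⟩ := hc
    have hβ2 : β = 2 * γ := by linear_combination -h2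
    rw [h1, hβ2] at hq
    have h3 : γ ^ 2 = 0 := by linear_combination hq / 2
    have h4 : γ = 0 := pow_eq_zero_iff (two_ne_zero) |>.mp h3
    exact hβγ (by rw [hβ2, h4]; ring)
  have keyne : (α, 2 * γ - β) ≠ (0 : ℂ × ℂ) := by
    intro h
    rw [Prod.ext_iff] at h
    rcases key with k | k
    · exact k h.1
    · exact k h.2
  refine ⟨?_, ?_, ?_, ?_, ?_⟩
  · intro u v huv
    constructor
    · rintro ⟨-, huniq⟩
      by_contra hcon
      push_neg at hcon
      obtain ⟨hu, hu2⟩ := hcon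
      have hΔ : (2*v*α*(β-2*γ))^2 - 4*(u+v*α^2)*(v*(β-2*γ)^2-u)
          = 4*u*(u - 2*(β-γ)^2*v) := by linear_combination 4*u*v*hq
      have hΔne : (2*v*α*(β-2*γ))^2 - 4*(u+v*α^2)*(v*(β-2*γ)^2-u) ≠ 0 := by
        rw [hΔ]
        exact mul_ne_zero (mul_ne_zero (by norm_num : (4:ℂ) ≠ 0) hu) (sub_ne_zero.mpr hu2)
      rcases eq_or_ne (u + v*α^2) 0 with hA | hA
      · have hB : 2*v*α*(β-2*γ) ≠ 0 := by
          intro hB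
          apply hΔne
          linear_combination (2*v*α*(β-2*γ)) * hB - 4*(v*(β-2*γ)^2-u) * hA
        obtain ⟨c, hc⟩ := huniq (1, 0) (v*(β-2*γ)^2 - u, -(2*v*α*(β-2*γ)))
          (by norm_num [Prod.ext_iff])
          (by
            intro h
            rw [Prod.ext_iff] at h
            exact hB (neg_eq_zero.mp h.2))
          (by simp; linear_combination hA)
          (by simp; linear_combination (v*(β-2*γ)^2-u)^2 * hA)
        have h2 := congrArg Prod.snd hc
        simp at h2
        apply hB
        rcases h2 with (h | h) | h <;> rw [h] <;> ring
      · obtain ⟨d, hd⟩ := IsAlgClosed.exists_pow_nat_eq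
          ((2*v*α*(β-2*γ))^2 - 4*(u+v*α^2)*(v*(β-2*γ)^2-u)) (zero_lt_two)
        have hdne : d ≠ 0 := by
          intro h0
          apply hΔne
          rw [← hd, h0]
          ring
        have h2A : (2 : ℂ) * (u + v*α^2) ≠ 0 := mul_ne_zero two_ne_zero hA
        obtain ⟨c, hc⟩ := huniq (-(2*v*α*(β-2*γ)) + d, 2*(u+v*α^2))
          (-(2*v*α*(β-2*γ)) - d, 2*(u+v*α^2))
          (by
            intro h
            rw [Prod.ext_iff] at h
            exact h2A h.2)
          (by
            intro h
            rw [Prod.ext_iff] at h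
            exact h2A h.2)
          (by simp; linear_combination (u+v*α^2) * hd)
          (by simp; linear_combination (u+v*α^2) * hd)
        have hsnd := congrArg Prod.snd hc
        have hfst := congrArg Prod.fst hc
        simp only [Prod.smul_snd, Prod.smul_fst, smul_eq_mul] at hsnd hfst
        have hc1 : c = 1 := by
          have h5 : (c - 1) * (2 * (u + v*α^2)) = 0 := by linear_combination -hsnd
          rcases mul_eq_zero.mp h5 with h6 | h6
          · linear_combination h6
          · exact absurd h6 h2A
        rw [hc1, one_mul] at hfst
        apply hdne
        linear_combination -hfst / 2
    · rintro (hu | hu)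
      · subst hu
        have hv : v ≠ 0 := by
          intro hv
          exact huv (by rw [hv])
        constructor
        · refine ⟨(2*γ-β, α), ?_, by show (0:ℂ) * _ + v * _ ^ 2 = 0; simp only; ring⟩
          intro h
          rw [Prod.ext_iff] at h
          rcases key with k | k
          · exact k h.2
          · exact k h.1
        · intro p p' hp hp' h h'
          have l : α * p.1 + (β-2*γ) * p.2 = 0 := by
            have hsq : v * (α * p.1 + (β-2*γ) * p.2)^2 = 0 := by linear_combination h
            exact pow_eq_zero_iff two_ne_zero |>.mp ((mul_eq_zero.mp hsq).resolve_left hv)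
          have l' : α * p'.1 + (β-2*γ) * p'.2 = 0 := by
            have hsq : v * (α * p'.1 + (β-2*γ) * p'.2)^2 = 0 := by linear_combination h'
            exact pow_eq_zero_iff two_ne_zero |>.mp ((mul_eq_zero.mp hsq).resolve_left hv)
          apply lin_prop α (β-2*γ) ?_ p p' hp l l'
          rcases key with k | k
          · exact Or.inl k
          · refine Or.inr fun h0 => k (by linear_combination -h0)
      · rcases eq_or_ne v 0 with hv | hv
        · exfalso
          apply huv
          rw [hu, hv]
          norm_num
        · subst hu
          constructor
          · refine ⟨(α, 2*γ-β), keyne, ?_⟩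
            simp only
            linear_combination v*(α^2 - (2*γ-β)^2)*hq
          · intro p p' hp hp' h h'
            have l : (β-2*γ) * p.1 + α * p.2 = 0 := by
              have hsq : v * ((β-2*γ) * p.1 + α * p.2)^2 = 0 := by
                linear_combination h - v*(p.1^2-p.2^2)*hq
              exact pow_eq_zero_iff two_ne_zero |>.mp ((mul_eq_zero.mp hsq).resolve_left hv)
            have l' : (β-2*γ) * p'.1 + α * p'.2 = 0 := by
              have hsq : v * ((β-2*γ) * p'.1 + α * p'.2)^2 = 0 := by
                linear_combination h' - v*(p'.1^2-p'.2^2)*hq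
              exact pow_eq_zero_iff two_ne_zero |>.mp ((mul_eq_zero.mp hsq).resolve_left hv)
            apply lin_prop (β-2*γ) α ?_ p p' hp l l'
            rcases key with k | k
            · exact Or.inr k
            · refine Or.inl fun h0 => k (by linear_combination -h0)
  · intro x y z
    linear_combination x^2 * hq
  · intro h
    rw [Prod.mk.injEq] at h
    rcases key with k | k
    · exact k h.1
    · exact k h.2
  · linear_combination (-(2*γ-β)^2) * hq
  · intro x t hxt h
    have l : (β-2*γ) * x + α * t = 0 := by
      have hsq : ((β-2*γ) * x + α * t)^2 = 0 := by
        linear_combination h + t^2 * hq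
      exact pow_eq_zero_iff two_ne_zero |>.mp hsq
    apply lin_prop (β-2*γ) α ?_ (α, 2*γ-β) (x, t) keyne (by ring) l
    rcases key with k | k
    · exact Or.inr k
    · refine Or.inl fun h0 => k (by linear_combination -h0)
end
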